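/- Let δ₁ > 0, k > 0, t > 0, and let f : [0,π] → ℝ be integrable. Define the kernel p(ψ) = (1/π)·Σ_{n∈ℤ} exp(−4δ₁n²t/k)·exp(2inψ) (a real-valued, absolutely convergent series). Then ∫₀^π ∫₀^π f(ψ')·p(ψ−ψ')·cos(2ψ) dψ' dψ = exp(−4δ₁t/k)·∫₀^π f(ψ')·cos(2ψ') dψ', and likewise ∫₀^π ∫₀^π f(ψ')·p(ψ−ψ')·sin(2ψ) dψ' dψ = exp(−4δ₁t/k)·∫₀^π f(ψ')·sin(2ψ') dψ'. In particular, the Stokes parameters evolve as Q(t) = e^{−4δ₁t/k}·Q_i and U(t) = e^{−4δ₁t/k}·U_i, so diffusion in polarisation angle suppresses the polarisation fraction by the factor e^{−4δ₁t/k}. -/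

import Mathlib

open Real MeasureTheory intervalIntegral

/-!
Writing `a n = exp (-4δ₁n²t/k)`, the kernel is `π⁻¹ ∑ a n cos (2nψ)`, uniformly convergent because
`a` is summable. Against the weight `cos (2ψ - θ)` on `[0, π]` only the harmonics `n = ±1` survive,
so `∫ p(ψ - b) cos (2ψ - θ) dψ = (a 1 + a (-1)) / 2 · cos (2b - θ) = e^{-4δ₁t/k} cos (2b - θ)`.
Fubini (the kernel is continuous and `f` is integrable) then gives the identity for every phase
`θ`; the phases `0` and `π/2` are the cosine and sine statements.
-/

/-- The fundamental solution (kernel) of the zero-drift linear polarisation diffusion equation: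
`p(ψ) = (1/π)·Σ_{n∈ℤ} exp(−4δ₁n²t/k)·e^{2inψ}`, a real-valued absolutely convergent series
(expressed as the real part of the complex series). -/
noncomputable def polarisationKernel (δ₁ k t : ℝ) (ψ : ℝ) : ℝ :=
  (1 / π) * (∑' n : ℤ,
    (Real.exp (-(4 * δ₁ * (n : ℝ) ^ 2 * t) / k) : ℂ) * Complex.exp (2 * Complex.I * n * ψ)).re

open Set Function

noncomputable def cosSeries (a : ℤ → ℝ) (x : ℝ) : ℝ := ∑' n : ℤ, a n * cos (2 * n * x)

section CosSeries

variable {a : ℤ → ℝ}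

lemma abs_mul_cos_le (c x : ℝ) : |c * cos x| ≤ |c| := by
  rw [abs_mul]
  exact mul_le_of_le_one_right (abs_nonneg c) (abs_cos_le_one x)

lemma summable_mul_cos (ha : Summable a) (x : ℝ) : Summable fun n : ℤ => a n * cos (2 * n * x) :=
  ha.abs.of_norm_bounded fun _ => abs_mul_cos_le ..

lemma re_tsum_ofReal_mul_cexp (ha : Summable a) (x : ℝ) :
    (∑' n : ℤ, (a n : ℂ) * Complex.exp (2 * Complex.I * n * x)).re = cosSeries a x := by
  have hrot (n : ℤ) : 2 * Complex.I * n * x = ((2 * n * x : ℝ) : ℂ) * Complex.I := by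
    push_cast; ring
  have hsum : Summable fun n : ℤ => (a n : ℂ) * Complex.exp (2 * Complex.I * n * x) :=
    ha.abs.of_norm_bounded fun n => by
      rw [norm_mul, hrot, Complex.norm_exp_ofReal_mul_I, mul_one, Complex.norm_real,
        Real.norm_eq_abs]
  rw [Complex.re_tsum hsum, cosSeries]
  exact tsum_congr fun n => by rw [hrot, Complex.re_ofReal_mul, Complex.exp_ofReal_mul_I_re]

lemma continuous_cosSeries (ha : Summable a) : Continuous (cosSeries a) :=
  continuous_tsum (fun _ => by fun_prop) ha.abs fun _ _ => abs_mul_cos_le ..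

lemma integral_cos_two_mul_add (j : ℤ) (β : ℝ) :
    ∫ ψ in (0 : ℝ)..π, cos (2 * j * ψ + β) = if j = 0 then π * cos β else 0 := by
  split_ifs with hj
  · simp [hj, mul_comm]
  · have hc : (2 * j : ℝ) ≠ 0 := by exact_mod_cast mul_ne_zero two_ne_zero hj
    rw [integral_comp_mul_add cos hc, integral_cos,
      show 2 * (j : ℝ) * π + β = β + j * (2 * π) by ring, sin_add_int_mul_two_pi]
    simp

lemma integral_cos_mul_cos_two_mul_sub (n : ℤ) (b θ : ℝ) :
    ∫ ψ in (0 : ℝ)..π, cos (2 * n * (ψ - b)) * cos (2 * ψ - θ)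
      = if n = 1 ∨ n = -1 then π / 2 * cos (2 * b - θ) else 0 := by
  have hprod (ψ : ℝ) : cos (2 * n * (ψ - b)) * cos (2 * ψ - θ)
      = (cos (2 * ((n + 1 : ℤ) : ℝ) * ψ + -(2 * n * b + θ))
        + cos (2 * ((n - 1 : ℤ) : ℝ) * ψ + (θ - 2 * n * b))) / 2 := by
    push_cast
    rw [show 2 * (n + 1 : ℝ) * ψ + -(2 * n * b + θ) = 2 * n * (ψ - b) + (2 * ψ - θ) by ring,
      show 2 * (n - 1 : ℝ) * ψ + (θ - 2 * n * b) = 2 * n * (ψ - b) - (2 * ψ - θ) by ring,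
      cos_add (2 * n * (ψ - b)), cos_sub (2 * n * (ψ - b))]
    ring
  simp_rw [hprod]
  rw [intervalIntegral.integral_div, intervalIntegral.integral_add
    ((by fun_prop : Continuous _).intervalIntegrable _ _)
    ((by fun_prop : Continuous _).intervalIntegrable _ _), integral_cos_two_mul_add,
    integral_cos_two_mul_add]
  rcases eq_or_ne n 1 with rfl | h1
  · norm_num [← cos_neg (2 * b - θ)]; ring_nf
  rcases eq_or_ne n (-1) with rfl | h2
  · norm_num; ring_nf
  rw [if_neg (by omega), if_neg (by omega), if_neg (by tauto)]
  simp

lemma integral_cosSeries_sub_mul_cos (ha : Summable a) (b θ : ℝ) :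
    ∫ ψ in (0 : ℝ)..π, cosSeries a (ψ - b) * cos (2 * ψ - θ)
      = π / 2 * (a 1 + a (-1)) * cos (2 * b - θ) := by
  set c := π / 2 * cos (2 * b - θ)
  have htermwise : HasSum
      (fun n : ℤ => ∫ ψ in (0 : ℝ)..π, a n * cos (2 * n * (ψ - b)) * cos (2 * ψ - θ))
      (∫ ψ in (0 : ℝ)..π, cosSeries a (ψ - b) * cos (2 * ψ - θ)) := by
    refine hasSum_integral_of_dominated_convergence (fun n _ => |a n|)
      (fun n => (by fun_prop : Continuous _).aestronglyMeasurable)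
      (fun n => .of_forall fun ψ _ => ?_) (.of_forall fun _ _ => ha.abs)
      intervalIntegrable_const (.of_forall fun ψ _ => ?_)
    · rw [mul_assoc, Real.norm_eq_abs, abs_mul]
      refine mul_le_of_le_one_right (abs_nonneg _) ?_
      rw [abs_mul]
      exact mul_le_one₀ (abs_cos_le_one _) (abs_nonneg _) (abs_cos_le_one _)
    · exact (summable_mul_cos ha (ψ - b)).hasSum.mul_right _
  have hterm (n : ℤ) : ∫ ψ in (0 : ℝ)..π, a n * cos (2 * n * (ψ - b)) * cos (2 * ψ - θ)
      = a n * if n = 1 ∨ n = -1 then c else 0 := by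
    simp_rw [mul_assoc (a n)]
    rw [intervalIntegral.integral_const_mul, integral_cos_mul_cos_two_mul_sub]
  simp_rw [hterm] at htermwise
  have hfinite := hasSum_sum_of_ne_finset_zero (L := .unconditional ℤ) (s := {1, -1})
    (f := fun n : ℤ => a n * if n = 1 ∨ n = -1 then c else 0) fun n hn => by simp_all
  rw [htermwise.unique hfinite, Finset.sum_pair (by decide)]
  simp only [true_or, or_true, if_true]
  ring

end CosSeries

lemma integral_integral_mul_swap {f : ℝ → ℝ} {G : ℝ → ℝ → ℝ} {a b : ℝ} (hab : a ≤ b)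
    (hf : IntegrableOn f (Icc a b)) (hG : Continuous (uncurry G)) :
    ∫ x in a..b, ∫ y in a..b, f y * G x y = ∫ y in a..b, f y * ∫ x in a..b, G x y := by
  obtain ⟨M, hM⟩ :=
    (isCompact_Icc.prod (isCompact_Icc (a := a) (b := b))).exists_bound_of_continuousOn
      hG.continuousOn
  set μ := volume.restrict (Ioc a b)
  have hbound : ∀ᵐ z ∂μ.prod μ, ‖uncurry G z‖ ≤ M := by
    rw [Measure.prod_restrict]
    exact ae_restrict_of_forall_mem (measurableSet_Ioc.prod measurableSet_Ioc) fun z hz =>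
      hM z ⟨Ioc_subset_Icc_self hz.1, Ioc_subset_Icc_self hz.2⟩
  have hint : Integrable (uncurry fun x y => f y * G x y) (μ.prod μ) := by
    refine ((hf.mono_set Ioc_subset_Icc_self).comp_snd μ |>.bdd_mul
      hG.aestronglyMeasurable hbound).congr (.of_forall fun z => ?_)
    exact mul_comm _ _
  simp_rw [integral_of_le hab]
  rw [integral_integral_swap hint]
  simp_rw [MeasureTheory.integral_const_mul]
  rfl

lemma summable_exp_neg_mul_int_sq {c : ℝ} (hc : 0 < c) :
    Summable fun n : ℤ => exp (-(c * n ^ 2)) :=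
  (summable_pow_mul_jacobiTheta₂_term_bound 0 (div_pos hc pi_pos) 0).congr fun n => by
    field_simp
    simp

noncomputable def polarisationCoeff (δ₁ k t : ℝ) (n : ℤ) : ℝ := exp (-(4 * δ₁ * n ^ 2 * t) / k)

section Kernel

variable {δ₁ k t : ℝ}

lemma summable_polarisationCoeff (hδ₁ : 0 < δ₁) (hk : 0 < k) (ht : 0 < t) :
    Summable (polarisationCoeff δ₁ k t) :=
  (summable_exp_neg_mul_int_sq (c := 4 * δ₁ * t / k) (by positivity)).congr fun n => by
    rw [polarisationCoeff]
    ring_nf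

lemma polarisationKernel_eq_cosSeries (hδ₁ : 0 < δ₁) (hk : 0 < k) (ht : 0 < t) :
    polarisationKernel δ₁ k t = fun ψ => 1 / π * cosSeries (polarisationCoeff δ₁ k t) ψ :=
  funext fun ψ => congrArg _ (re_tsum_ofReal_mul_cexp (summable_polarisationCoeff hδ₁ hk ht) ψ)

lemma integral_integral_polarisationKernel_mul_cos (hδ₁ : 0 < δ₁) (hk : 0 < k) (ht : 0 < t)
    {f : ℝ → ℝ} (hf : IntegrableOn f (Icc 0 π)) (θ : ℝ) :
    ∫ ψ in (0 : ℝ)..π, ∫ ψ' in (0 : ℝ)..π,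
        f ψ' * polarisationKernel δ₁ k t (ψ - ψ') * cos (2 * ψ - θ)
      = exp (-(4 * δ₁ * t) / k) * ∫ ψ' in (0 : ℝ)..π, f ψ' * cos (2 * ψ' - θ) := by
  have ha := summable_polarisationCoeff hδ₁ hk ht
  have hK := polarisationKernel_eq_cosSeries hδ₁ hk ht
  have hcont : Continuous
      (uncurry fun ψ ψ' => polarisationKernel δ₁ k t (ψ - ψ') * cos (2 * ψ - θ)) := by
    rw [hK]
    have := continuous_cosSeries ha
    fun_prop
  simp_rw [mul_assoc (f _)]
  rw [integral_integral_mul_swap pi_pos.le hf hcont, ← intervalIntegral.integral_const_mul]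
  refine integral_congr fun ψ' _ => ?_
  simp_rw [hK, mul_assoc (1 / π)]
  rw [intervalIntegral.integral_const_mul, integral_cosSeries_sub_mul_cos ha]
  simp only [polarisationCoeff]
  field_simp
  ring_nf

end Kernel

/-- Evolution of the Stokes parameters under polarisation diffusion: convolving with the
fundamental solution multiplies both `Q = ∫ ρ cos 2ψ` and `U = ∫ ρ sin 2ψ` by
`exp(−4δ₁t/k)`, so diffusion in polarisation angle suppresses the polarisation fraction
by the factor `e^{−4δ₁t/k}`. -/
theorem stokes_suppression (δ₁ k t : ℝ) (hδ₁ : 0 < δ₁) (hk : 0 < k) (ht : 0 < t)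
    (f : ℝ → ℝ) (hf : IntegrableOn f (Set.Icc 0 π)) :
    (∫ ψ in (0 : ℝ)..π, ∫ ψ' in (0 : ℝ)..π,
        f ψ' * polarisationKernel δ₁ k t (ψ - ψ') * Real.cos (2 * ψ))
      = Real.exp (-(4 * δ₁ * t) / k) * ∫ ψ' in (0 : ℝ)..π, f ψ' * Real.cos (2 * ψ') ∧
    (∫ ψ in (0 : ℝ)..π, ∫ ψ' in (0 : ℝ)..π,
        f ψ' * polarisationKernel δ₁ k t (ψ - ψ') * Real.sin (2 * ψ))
      = Real.exp (-(4 * δ₁ * t) / k) * ∫ ψ' in (0 : ℝ)..π, f ψ' * Real.sin (2 * ψ') := by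
  have hphase := integral_integral_polarisationKernel_mul_cos hδ₁ hk ht hf
  exact ⟨by simpa using hphase 0, by simpa [cos_sub_pi_div_two] using hphase (π / 2)⟩
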